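/- Let A be a regular n×n max-plus matrix (n ≥ 1), x the orbit of A from x0 : Fin n → ℝ, k l : ℕ, i j : Fin n, α ∈ ℝ, and let ∼ be either ≥ or >. Then x k i - x l j ∼ α holds if and only if max over r : Fin n of ((A^⊗k) i r + (x0 r : WithBot ℝ)) ∼ max over s : Fin n of ((α : ℝ) + (A^⊗l) j s + (x0 s : WithBot ℝ)), the comparison being taken in WithBot ℝ. That is, every time-difference proposition about an orbit is equivalent to a comparison of max-plus linear expressions in the initial vector. -/

import Mathlib

/-- Max-plus matrix product: `(A ⊗ B) i j = max_k (A i k + B k j)`. -/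
def mpMul {n : ℕ} (A B : Matrix (Fin n) (Fin n) (WithBot ℝ)) :
    Matrix (Fin n) (Fin n) (WithBot ℝ) :=
  fun i j => Finset.univ.sup fun k => A i k + B k j

/-- Max-plus identity matrix: `0` on the diagonal, `ε = ⊥` elsewhere. -/
def mpId (n : ℕ) : Matrix (Fin n) (Fin n) (WithBot ℝ) :=
  fun i j => if i = j then ((0 : ℝ) : WithBot ℝ) else ⊥

/-- Max-plus matrix power `A^⊗m`. -/
def mpPow {n : ℕ} (A : Matrix (Fin n) (Fin n) (WithBot ℝ)) :
    ℕ → Matrix (Fin n) (Fin n) (WithBot ℝ)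
  | 0 => mpId n
  | m + 1 => mpMul A (mpPow A m)

/-- `A` is regular: every row contains at least one finite entry. -/
def MPRegular {n : ℕ} (A : Matrix (Fin n) (Fin n) (WithBot ℝ)) : Prop :=
  ∀ i : Fin n, ∃ j : Fin n, A i j ≠ ⊥

/-- The orbit of a (regular) max-plus matrix `A` from the initial vector
`x0`: `x 0 = x0` and `x (k+1) i = max_j (A i j + x k j)` (for regular `A`
this maximum is a real number, extracted with `WithBot.unbot' 0`). -/
noncomputable def mpOrbit {n : ℕ} (A : Matrix (Fin n) (Fin n) (WithBot ℝ))
    (x0 : Fin n → ℝ) : ℕ → Fin n → ℝ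
  | 0 => x0
  | k + 1 => fun i =>
      WithBot.unbotD 0 (Finset.univ.sup fun j => A i j + ((mpOrbit A x0 k j : ℝ) : WithBot ℝ))

lemma sup_add_left {ι : Type*} [Fintype ι] [Nonempty ι] (a : WithBot ℝ) (f : ι → WithBot ℝ) :
    (Finset.univ.sup fun r => a + f r) = a + Finset.univ.sup f := by
  obtain ⟨m, -, hm⟩ := Finset.exists_mem_eq_sup Finset.univ Finset.univ_nonempty f
  rw [hm]
  exact le_antisymm
    (Finset.sup_le fun r _ => add_le_add_right (hm ▸ Finset.le_sup (Finset.mem_univ r)) a)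
    (Finset.le_sup (f := fun r => a + f r) (Finset.mem_univ m))

lemma sup_add_right {ι : Type*} [Fintype ι] [Nonempty ι] (a : WithBot ℝ) (f : ι → WithBot ℝ) :
    (Finset.univ.sup fun r => f r + a) = Finset.univ.sup f + a := by
  obtain ⟨m, -, hm⟩ := Finset.exists_mem_eq_sup Finset.univ Finset.univ_nonempty f
  rw [hm]
  exact le_antisymm
    (Finset.sup_le fun r _ => add_le_add_left (hm ▸ Finset.le_sup (Finset.mem_univ r)) a)
    (Finset.le_sup (f := fun r => f r + a) (Finset.mem_univ m))


lemma mpPow_regular {n : ℕ} {A : Matrix (Fin n) (Fin n) (WithBot ℝ)}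
    (hA : MPRegular A) (k : ℕ) : MPRegular (mpPow A k) := by
  induction k with
  | zero => exact fun i => ⟨i, by simp [mpPow, mpId]⟩
  | succ m ih =>
    intro i
    obtain ⟨p, hp⟩ := hA i
    obtain ⟨q, hq⟩ := ih p
    refine ⟨q, fun h => ?_⟩
    have hle : A i p + mpPow A m p q ≤ mpPow A (m+1) i q :=
      Finset.le_sup (f := fun r => A i r + mpPow A m r q) (Finset.mem_univ p)
    rw [h, le_bot_iff, WithBot.add_eq_bot] at hle
    tauto

lemma mpOrbit_eq {n : ℕ} (hn : 1 ≤ n) {A : Matrix (Fin n) (Fin n) (WithBot ℝ)}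
    (hA : MPRegular A) (x0 : Fin n → ℝ) (k : ℕ) (i : Fin n) :
    ((mpOrbit A x0 k i : ℝ) : WithBot ℝ) =
      Finset.univ.sup fun r => mpPow A k i r + ((x0 r : ℝ) : WithBot ℝ) := by
  haveI : Nonempty (Fin n) := ⟨⟨0, hn⟩⟩
  induction k generalizing i with
  | zero =>
    simp only [mpOrbit, mpPow, mpId]
    refine le_antisymm (Finset.le_sup_of_le (Finset.mem_univ i) (by simp)) ?_
    refine Finset.sup_le fun r _ => ?_
    by_cases h : i = r
    · simp [h]
    · simp [h]
  | succ m ih =>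
    have key : (Finset.univ.sup fun j => A i j + ((mpOrbit A x0 m j : ℝ) : WithBot ℝ)) =
        Finset.univ.sup fun r => mpPow A (m+1) i r + ((x0 r : ℝ) : WithBot ℝ) := by
      calc (Finset.univ.sup fun j => A i j + ((mpOrbit A x0 m j : ℝ) : WithBot ℝ))
          = Finset.univ.sup fun j => Finset.univ.sup fun r =>
              (A i j + mpPow A m j r) + ((x0 r : ℝ) : WithBot ℝ) := by
            refine Finset.sup_congr rfl fun j _ => ?_
            rw [ih j, ← sup_add_left]
            exact Finset.sup_congr rfl fun r _ => (add_assoc _ _ _).symm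
        _ = Finset.univ.sup fun r => Finset.univ.sup fun j =>
              (A i j + mpPow A m j r) + ((x0 r : ℝ) : WithBot ℝ) := by
            rw [Finset.sup_comm]
        _ = Finset.univ.sup fun r => mpPow A (m+1) i r + ((x0 r : ℝ) : WithBot ℝ) := by
            refine Finset.sup_congr rfl fun r _ => ?_
            rw [sup_add_right]
            rfl
    have hne : (Finset.univ.sup fun j => A i j + ((mpOrbit A x0 m j : ℝ) : WithBot ℝ)) ≠ ⊥ := by
      obtain ⟨p, hp⟩ := hA i
      intro h
      have hle : A i p + ((mpOrbit A x0 m p : ℝ) : WithBot ℝ) ≤ ⊥ := h ▸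
        Finset.le_sup (f := fun j => A i j + ((mpOrbit A x0 m j : ℝ) : WithBot ℝ))
          (Finset.mem_univ p)
      rw [le_bot_iff, WithBot.add_eq_bot] at hle
      rcases hle with h | h
      · exact hp h
      · exact WithBot.coe_ne_bot h
    obtain ⟨y, hy⟩ := WithBot.ne_bot_iff_exists.mp hne
    show ((WithBot.unbotD 0 _ : ℝ) : WithBot ℝ) = _
    rw [← key, ← hy]
    simp

/-- A time-difference proposition `x k i - x l j ∼ α` about the orbit of a
regular max-plus matrix is equivalent to a comparison of two max-plus linear
expressions in the initial vector, where `∼` is `≥` or `>` (as `Rr` on `ℝ`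
and correspondingly `Rw` on `WithBot ℝ`). -/
theorem td_prop_initial {n : ℕ} (hn : 1 ≤ n)
    (A : Matrix (Fin n) (Fin n) (WithBot ℝ)) (hA : MPRegular A)
    (x0 : Fin n → ℝ) (k l : ℕ) (i j : Fin n) (α : ℝ)
    (Rr : ℝ → ℝ → Prop) (Rw : WithBot ℝ → WithBot ℝ → Prop)
    (hR : (Rr = (· ≥ ·) ∧ Rw = (· ≥ ·)) ∨ (Rr = (· > ·) ∧ Rw = (· > ·))) :
    Rr (mpOrbit A x0 k i - mpOrbit A x0 l j) α ↔
      Rw (Finset.univ.sup fun r => mpPow A k i r + ((x0 r : ℝ) : WithBot ℝ))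
         (Finset.univ.sup fun s =>
           ((α : ℝ) : WithBot ℝ) + mpPow A l j s + ((x0 s : ℝ) : WithBot ℝ)) := by
  haveI : Nonempty (Fin n) := ⟨⟨0, hn⟩⟩
  have h1 : (Finset.univ.sup fun r => mpPow A k i r + ((x0 r : ℝ) : WithBot ℝ)) =
      ((mpOrbit A x0 k i : ℝ) : WithBot ℝ) := (mpOrbit_eq hn hA x0 k i).symm
  have h2 : (Finset.univ.sup fun s =>
      ((α : ℝ) : WithBot ℝ) + mpPow A l j s + ((x0 s : ℝ) : WithBot ℝ)) =
      ((α + mpOrbit A x0 l j : ℝ) : WithBot ℝ) := by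
    have : (Finset.univ.sup fun s =>
        ((α : ℝ) : WithBot ℝ) + mpPow A l j s + ((x0 s : ℝ) : WithBot ℝ)) =
        Finset.univ.sup fun s =>
          ((α : ℝ) : WithBot ℝ) + (mpPow A l j s + ((x0 s : ℝ) : WithBot ℝ)) :=
      Finset.sup_congr rfl fun s _ => add_assoc _ _ _
    rw [this, sup_add_left, ← mpOrbit_eq hn hA x0 l j, ← WithBot.coe_add]
  rw [h1, h2]
  rcases hR with ⟨hr, hw⟩ | ⟨hr, hw⟩ <;> subst hr <;> subst hw
  · simp only [ge_iff_le, WithBot.coe_le_coe]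
    constructor <;> intro h <;> linarith
  · simp only [gt_iff_lt, WithBot.coe_lt_coe]
    constructor <;> intro h <;> linarith
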